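/- Let μ be a positive measure on 𝔻 such that ∬_𝔻 |h(z)|² dμ(z) ≤ C‖h‖²_{H²} for all scalar h ∈ H². Then for every Banach space X and every analytic f : 𝔻 → X with ‖f‖²_{H²(X)} := sup_{0≤r<1} ∫_𝕋 ‖f(rζ)‖²_X dm(ζ) < ∞, one has ∬_𝔻 ‖f(z)‖²_X dμ(z) ≤ C‖f‖²_{H²(X)}; that is, the Carleson embedding holds with the same constant for H² spaces with values in an arbitrary Banach space. -/

import Mathlib

open MeasureTheory Metric Set
open scoped ENNReal Topology

noncomputable section

abbrev 𝔻 : Set ℂ := Metric.ball 0 1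

/-- the set of mean values `∫_𝕋 ‖h(rζ)‖² dm(ζ)` over radii `0 ≤ r < 1` -/
noncomputable def hardySet {E : Type*} [NormedAddCommGroup E] (h : ℂ → E) : Set ℝ :=
  (fun r : ℝ => (2 * Real.pi)⁻¹ *
      ∫ t in (0 : ℝ)..(2 * Real.pi), ‖h ((r : ℂ) * Complex.exp ((t : ℂ) * Complex.I))‖ ^ 2) ''
    Set.Ico 0 1

/-- the squared Hardy space norm `‖h‖²_{H²(E)} = sup_{0≤r<1} ∫_𝕋 ‖h(rζ)‖² dm(ζ)` -/
noncomputable def hardySq {E : Type*} [NormedAddCommGroup E] (h : ℂ → E) : ℝ :=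
  sSup (hardySet h)

/-! For fixed `r < 1` and `ε > 0`, approximate `log (‖f (r ·)‖ + ε)` on the unit circle by the
real part of an analytic polynomial `q`. Then `H = exp (q + ε)` is an entire scalar function with
`‖f (r z)‖ ≤ |H z|` on the closed disc (maximum principle for `f (r ·) / H`) and
`|H|² ≤ e^{4ε} (‖f (r ·)‖ + ε)²` on the circle. Circle means of `|H|²` increase with the radius
(Parseval for the Taylor polynomials of `H`), so `‖H‖²_{H²}` is the mean over the unit circle, and
the scalar Carleson inequality for `H` bounds `∫ ‖f (r ·)‖² dμ` by `C e^{4ε} (‖f‖²_{H²(X)} + O(ε))`.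
Let `ε → 0`, then `r → 1` with Fatou's lemma. -/

open Filter Real

open Polynomial in
theorem circleAverage_norm_sq_sum_pow (c : ℕ → ℂ) (n : ℕ) (R : ℝ) :
    circleAverage (fun z ↦ ‖∑ k ∈ Finset.range n, c k * z ^ k‖ ^ 2) 0 R =
      ∑ k ∈ Finset.range n, ‖c k‖ ^ 2 * R ^ (2 * k) := by
  set q : ℂ[X] := ∑ k ∈ Finset.range n, C (c k * R ^ k) * X ^ k
  have hcoeff (i : ℕ) : q.coeff i = if i < n then c i * R ^ i else 0 := by
    simp only [q, finsetSum_coeff, coeff_C_mul_X_pow, Finset.sum_ite_eq,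
      Finset.mem_range]
  have hsupp : q.support ⊆ Finset.range n := fun i hi ↦ by
    by_contra h
    simp_all
  rw [circleAverage_eq_circleAverage_zero_one]
  have heval : (fun z : ℂ ↦ ‖∑ k ∈ Finset.range n, c k * ((R : ℂ) * z + 0) ^ k‖ ^ 2) =
      fun z ↦ ‖q.eval z‖ ^ 2 := by
    ext z
    simp [q, eval_finsetSum, mul_pow, mul_assoc]
  rw [heval, ← sum_sq_norm_coeff_eq_circleAverage,
    Finset.sum_subset hsupp fun i _ hi ↦ by simp [notMem_support_iff.mp hi]]
  refine Finset.sum_congr rfl fun k hk ↦ ?_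
  rw [hcoeff, if_pos (Finset.mem_range.mp hk), norm_mul, norm_pow, Complex.norm_real,
    Real.norm_eq_abs, mul_pow, ← pow_mul, mul_comm k 2, (even_two_mul k).pow_abs]

theorem circleAverage_norm_sq_sum_pow_le (c : ℕ → ℂ) (n : ℕ) {ρ R : ℝ} (h : |ρ| ≤ |R|) :
    circleAverage (fun z ↦ ‖∑ k ∈ Finset.range n, c k * z ^ k‖ ^ 2) 0 ρ ≤
      circleAverage (fun z ↦ ‖∑ k ∈ Finset.range n, c k * z ^ k‖ ^ 2) 0 R := by
  rw [circleAverage_norm_sq_sum_pow, circleAverage_norm_sq_sum_pow]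
  refine Finset.sum_le_sum fun k _ ↦ mul_le_mul_of_nonneg_left ?_ (sq_nonneg _)
  rw [← (even_two_mul k).pow_abs ρ, ← (even_two_mul k).pow_abs R]
  exact pow_le_pow_left₀ (abs_nonneg ρ) h _

theorem TendstoUniformlyOn.tendsto_circleAverage_norm_sq {ι E : Type*} [NormedAddCommGroup E]
    {l : Filter ι} [l.IsCountablyGenerated] {F : ι → ℂ → E} {g : ℂ → E} {c : ℂ} {R : ℝ}
    (h : TendstoUniformlyOn F g l (sphere c |R|))
    (hF : ∀ᶠ n in l, ContinuousOn (F n) (sphere c |R|)) (hg : ContinuousOn g (sphere c |R|)) :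
    Tendsto (fun n ↦ circleAverage (fun z ↦ ‖F n z‖ ^ 2) c R) l
      (𝓝 (circleAverage (fun z ↦ ‖g z‖ ^ 2) c R)) := by
  obtain ⟨K, hK⟩ := (isCompact_sphere c |R|).exists_bound_of_continuousOn hg
  have hbound : ∀ᶠ n in l, ∀ z ∈ sphere c |R|, ‖F n z‖ ≤ K + 1 := by
    filter_upwards [Metric.tendstoUniformlyOn_iff.mp h 1 one_pos] with n hn z hz
    have := norm_le_norm_add_norm_sub' (F n z) (g z)
    rw [← dist_eq_norm, dist_comm] at this
    linarith [hK z hz, hn z hz]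
  simp only [circleAverage_def]
  refine (intervalIntegral.tendsto_integral_filter_of_dominated_convergence (fun _ ↦ (K + 1) ^ 2)
    ?_ ?_ intervalIntegrable_const ?_).const_smul _
  · filter_upwards [hF] with n hn
    exact ((hn.comp_continuous (continuous_circleMap c R)
      (circleMap_mem_sphere' c R)).norm.pow 2).aestronglyMeasurable
  · filter_upwards [hbound] with n hn
    refine ae_of_all _ fun θ _ ↦ ?_
    rw [norm_pow, norm_norm]
    gcongr
    exact hn _ (circleMap_mem_sphere' c R θ)
  · exact ae_of_all _ fun θ _ ↦ ((h.tendsto_at (circleMap_mem_sphere' c R θ)).norm.pow 2)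

theorem circleAverage_norm_sq_le_of_differentiable {G : ℂ → ℂ} (hG : Differentiable ℂ G)
    {ρ R : ℝ} (h : |ρ| ≤ |R|) :
    circleAverage (fun z ↦ ‖G z‖ ^ 2) 0 ρ ≤ circleAverage (fun z ↦ ‖G z‖ ^ 2) 0 R := by
  obtain ⟨p, hp⟩ : ∃ p, HasFPowerSeriesOnBall G p 0 ∞ :=
    ⟨_, hG.hasFPowerSeriesOnBall 0 (R := 1) one_pos⟩
  have htaylor : TendstoUniformlyOn (fun n z ↦ ∑ k ∈ Finset.range n, p.coeff k * z ^ k) G atTop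
      (closedBall 0 |R|) := by
    have := hp.tendstoUniformlyOn (r' := (|R| + 1).toNNReal) ENNReal.coe_lt_top
    simp only [FormalMultilinearSeries.partialSum, FormalMultilinearSeries.apply_eq_pow_smul_coeff,
      smul_eq_mul, mul_comm, zero_add] at this
    refine this.mono (closedBall_subset_ball ?_)
    rw [Real.coe_toNNReal _ (by positivity)]
    linarith
  have hlim {s : ℝ} (hs : |s| ≤ |R|) : Tendsto (fun n ↦ circleAverage
      (fun z ↦ ‖∑ k ∈ Finset.range n, p.coeff k * z ^ k‖ ^ 2) 0 s) atTop
      (𝓝 (circleAverage (fun z ↦ ‖G z‖ ^ 2) 0 s)) :=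
    (htaylor.mono (sphere_subset_closedBall.trans
      (closedBall_subset_closedBall (abs_abs s ▸ hs)))).tendsto_circleAverage_norm_sq
      (Eventually.of_forall fun n ↦ (by fun_prop : Continuous _).continuousOn)
      hG.continuous.continuousOn
  exact le_of_tendsto_of_tendsto' (hlim h) (hlim le_rfl) fun n ↦
    circleAverage_norm_sq_sum_pow_le _ n h

theorem circleAverage_le_mul_add {φ ψ : ℂ → ℝ} {c : ℂ} {R a b : ℝ} (hφ : CircleIntegrable φ c R)
    (hψ : CircleIntegrable ψ c R) (h : ∀ z ∈ sphere c |R|, ψ z ≤ a * φ z + b) :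
    circleAverage ψ c R ≤ a * circleAverage φ c R + b := by
  have haφ : CircleIntegrable (fun z ↦ a • φ z) c R := hφ.const_smul
  calc circleAverage ψ c R ≤ circleAverage (fun z ↦ a • φ z + b) c R :=
        circleAverage_mono hψ (haφ.add (circleIntegrable_const b c R)) h
    _ = a * circleAverage φ c R + b := by
        rw [circleAverage_fun_add haφ (circleIntegrable_const b c R), circleAverage_fun_smul,
          circleAverage_const, smul_eq_mul]

theorem Complex.re_mul_zpow_of_norm_eq_one {z : ℂ} (hz : ‖z‖ = 1) (c : ℂ) (m : ℤ) :
    (c * z ^ m).re = ((if 0 ≤ m then c else (starRingEnd ℂ) c) * z ^ m.natAbs).re := by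
  rcases le_or_gt 0 m with hm | hm
  · rw [if_pos hm, ← zpow_natCast, Int.natAbs_of_nonneg hm]
  · have hzm : z ^ m = (starRingEnd ℂ) (z ^ m.natAbs) := by
      rw [← Complex.inv_eq_conj (by rw [norm_pow, hz, one_pow]), ← zpow_natCast, ← zpow_neg,
        Int.ofNat_natAbs_of_nonpos hm.le, neg_neg]
    rw [if_neg hm.not_ge, hzm, ← Complex.conj_re, map_mul, Complex.conj_conj]

open Polynomial in
theorem exists_polynomial_re_approx {u : ℂ → ℝ} (hu : ContinuousOn u (sphere 0 1)) {ε : ℝ}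
    (hε : 0 < ε) : ∃ q : ℂ[X], ∀ z ∈ sphere (0 : ℂ) 1, |(q.eval z).re - u z| < ε := by
  have : Fact (0 < 2 * π) := ⟨two_pi_pos⟩
  let v : C(AddCircle (2 * π), ℂ) := ⟨fun x ↦ u (AddCircle.toCircle x),
    Complex.continuous_ofReal.comp (hu.comp_continuous
      (continuous_subtype_val.comp AddCircle.continuous_toCircle) fun x ↦ (AddCircle.toCircle x).2)⟩
  have hv : v ∈ closure (Submodule.span ℂ (range (fourier (T := 2 * π))) : Set _) := by
    rw [← Submodule.topologicalClosure_coe, span_fourier_closure_eq_top]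
    trivial
  obtain ⟨P, hP, hvP⟩ := Metric.mem_closure_iff.mp hv ε hε
  obtain ⟨c, rfl⟩ := Finsupp.mem_span_range_iff_exists_finsupp.mp hP
  -- on the circle, a mode `c zᵐ` with `m < 0` has the same real part as `conj c · z^|m|`
  refine ⟨∑ m ∈ c.support, C (if 0 ≤ m then c m else (starRingEnd ℂ) (c m)) * X ^ m.natAbs,
    fun z hz ↦ ?_⟩
  obtain ⟨x, hx⟩ := (AddCircle.homeomorphCircle two_pi_pos.ne').surjective ⟨z, hz⟩
  replace hx : (AddCircle.toCircle x : ℂ) = z := by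
    rw [← AddCircle.homeomorphCircle_apply two_pi_pos.ne', hx]
  have hPx : (c.sum fun m a ↦ a • fourier m) x = ∑ m ∈ c.support, c m * z ^ m := by
    simp only [Finsupp.sum, ContinuousMap.coe_sum, Finset.sum_apply, ContinuousMap.coe_smul,
      Pi.smul_apply, smul_eq_mul, fourier_apply, AddCircle.toCircle_zsmul, Circle.coe_zpow, hx]
  have hre : (eval z (∑ m ∈ c.support,
      C (if 0 ≤ m then c m else (starRingEnd ℂ) (c m)) * X ^ m.natAbs)).re =
      ((c.sum fun m a ↦ a • fourier m) x).re := by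
    simp only [hPx, eval_finsetSum, eval_mul, eval_C, eval_pow, eval_X, Complex.re_sum]
    exact Finset.sum_congr rfl fun m _ ↦
      (Complex.re_mul_zpow_of_norm_eq_one (mem_sphere_zero_iff_norm.mp hz) _ _).symm
  have hvx : u z = v x := by simp [v, hx]
  rw [hre, ← Complex.ofReal_re (u z), hvx, ← Complex.sub_re]
  calc _ ≤ ‖(c.sum fun m a ↦ a • fourier m) x - v x‖ := Complex.abs_re_le_norm _
    _ ≤ dist (c.sum fun m a ↦ a • fourier m) v := by
        rw [← dist_eq_norm]; exact ContinuousMap.dist_apply_le_dist x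
    _ < ε := by rw [dist_comm]; exact hvP

theorem norm_le_norm_of_forall_mem_frontier {E F : Type*} [NormedAddCommGroup E]
    [NormedSpace ℂ E] [Nontrivial E] [NormedAddCommGroup F] [NormedSpace ℂ F] {U : Set E}
    (hU : Bornology.IsBounded U) {g : E → F} {H : E → ℂ} (hg : DiffContOnCl ℂ g U)
    (hH : DiffContOnCl ℂ H U) (hH₀ : ∀ z ∈ closure U, H z ≠ 0)
    (hle : ∀ z ∈ frontier U, ‖g z‖ ≤ ‖H z‖) {z : E} (hz : z ∈ closure U) :
    ‖g z‖ ≤ ‖H z‖ := by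
  have hquot : ‖(H z)⁻¹ • g z‖ ≤ 1 := by
    refine Complex.norm_le_of_forall_mem_frontier_norm_le hU ((hH.inv hH₀).smul hg)
      (fun w hw ↦ ?_) hz
    have hHw : 0 < ‖H w‖ := norm_pos_iff.mpr (hH₀ w (frontier_subset_closure hw))
    rw [norm_smul, Pi.inv_apply, norm_inv, inv_mul_le_one₀ hHw]
    exact hle w hw
  rw [norm_smul, norm_inv, inv_mul_le_one₀ (norm_pos_iff.mpr (hH₀ z hz))] at hquot
  exact hquot

theorem ofReal_mul_mem_disc {r : ℝ} (hr : r ∈ Ico 0 1) {z : ℂ} (hz : ‖z‖ ≤ 1) :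
    (r : ℂ) * z ∈ 𝔻 := by
  rw [mem_ball_zero_iff, norm_mul, Complex.norm_real, Real.norm_of_nonneg hr.1]
  exact mul_lt_one_of_nonneg_of_lt_one_left hr.1 hr.2 hz

theorem exists_entire_majorant {X : Type*} [NormedAddCommGroup X] [NormedSpace ℂ X]
    {g : ℂ → X} (hg : DiffContOnCl ℂ g 𝔻) {ε : ℝ} (hε : 0 < ε) :
    ∃ H : ℂ → ℂ, Differentiable ℂ H ∧ (∀ z ∈ closedBall (0 : ℂ) 1, ‖g z‖ ≤ ‖H z‖) ∧
      ∀ z ∈ sphere (0 : ℂ) 1,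
        ‖H z‖ ^ 2 ≤ exp (4 * ε) * (1 + ε) * ‖g z‖ ^ 2 + exp (4 * ε) * (ε ^ 2 + ε) := by
  have hpos (z : ℂ) : 0 < ‖g z‖ + ε := by positivity
  have hgc : ContinuousOn g (sphere 0 1) :=
    hg.continuousOn.mono (closure_ball (0 : ℂ) one_ne_zero ▸ sphere_subset_closedBall)
  obtain ⟨q, hq⟩ := exists_polynomial_re_approx (u := fun z ↦ log (‖g z‖ + ε))
    ((hgc.norm.add continuousOn_const).log fun z _ ↦ (hpos z).ne') hε
  have hcircle : ∀ z ∈ sphere (0 : ℂ) 1, ‖g z‖ + ε ≤ ‖Complex.exp (q.eval z + ε)‖ ∧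
      ‖Complex.exp (q.eval z + ε)‖ ≤ exp (2 * ε) * (‖g z‖ + ε) := by
    intro z hz
    have hqz := abs_lt.mp (hq z hz)
    rw [Complex.norm_exp, Complex.add_re, Complex.ofReal_re, ← Real.exp_log (hpos z),
      ← Real.exp_add]
    exact ⟨Real.exp_le_exp.mpr (by linarith), Real.exp_le_exp.mpr (by linarith)⟩
  refine ⟨fun z ↦ Complex.exp (q.eval z + ε), by fun_prop, fun z hz ↦ ?_, fun z hz ↦ ?_⟩
  · refine norm_le_norm_of_forall_mem_frontier (H := fun w ↦ Complex.exp (q.eval w + ε))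
      isBounded_ball hg (by fun_prop : Differentiable ℂ _).diffContOnCl
      (fun _ _ ↦ Complex.exp_ne_zero _) (fun w hw ↦ ?_) (closure_ball (0 : ℂ) one_ne_zero ▸ hz)
    rw [frontier_ball (0 : ℂ) one_ne_zero] at hw
    exact (le_add_of_nonneg_right hε.le).trans (hcircle w hw).1
  · have ha := norm_nonneg (g z)
    calc ‖Complex.exp (q.eval z + ε)‖ ^ 2 ≤ (exp (2 * ε) * (‖g z‖ + ε)) ^ 2 := by
          gcongr; exact (hcircle z hz).2
      _ = exp (4 * ε) * (‖g z‖ + ε) ^ 2 := by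
          rw [mul_pow, ← Real.exp_nat_mul]; ring_nf
      _ ≤ _ := by
          rw [mul_assoc, ← mul_add]
          gcongr
          nlinarith [mul_nonneg hε.le (sq_nonneg (‖g z‖ - 1))]

section Hardy

variable {E : Type*} [NormedAddCommGroup E]

theorem hardySet_eq_image_circleAverage (h : ℂ → E) :
    hardySet h = (fun r ↦ circleAverage (fun z ↦ ‖h z‖ ^ 2) 0 r) '' Ico 0 1 := by
  simp [hardySet, circleAverage_def, circleMap]

theorem hardySq_nonneg (h : ℂ → E) : 0 ≤ hardySq h := by
  refine Real.sSup_nonneg ?_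
  rw [hardySet_eq_image_circleAverage]
  rintro _ ⟨r, -, rfl⟩
  exact circleAverage_nonneg_of_nonneg fun _ _ ↦ sq_nonneg _

theorem circleAverage_le_hardySq {h : ℂ → E}
    (hb : BddAbove (hardySet h)) {r : ℝ} (hr : r ∈ Ico 0 1) :
    circleAverage (fun z ↦ ‖h z‖ ^ 2) 0 r ≤ hardySq h :=
  le_csSup hb (hardySet_eq_image_circleAverage h ▸ mem_image_of_mem _ hr)

end Hardy

theorem Differentiable.circleAverage_mem_upperBounds_hardySet {H : ℂ → ℂ}
    (hH : Differentiable ℂ H) :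
    circleAverage (fun z ↦ ‖H z‖ ^ 2) 0 1 ∈ upperBounds (hardySet H) := by
  rw [hardySet_eq_image_circleAverage]
  rintro _ ⟨r, hr, rfl⟩
  refine circleAverage_norm_sq_le_of_differentiable hH ?_
  rw [abs_one, abs_of_nonneg hr.1]
  exact hr.2.le

theorem ENNReal.ofReal_mul_le_ofReal_mul (C : ℝ) {x y : ℝ} (hx : 0 ≤ x) (hxy : x ≤ y) :
    ENNReal.ofReal (C * x) ≤ ENNReal.ofReal (C * y) := by
  rcases le_total 0 C with hC | hC
  · exact ENNReal.ofReal_le_ofReal (mul_le_mul_of_nonneg_left hxy hC)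
  · rw [ENNReal.ofReal_of_nonpos (mul_nonpos_of_nonpos_of_nonneg hC hx)]
    exact bot_le

theorem setLIntegral_disc_le_of_forall_dilation {μ : Measure ℂ} {F : ℂ → ℝ≥0∞}
    (hF : ContinuousOn F 𝔻) {B : ℝ≥0∞}
    (h : ∀ r ∈ Ioo (0 : ℝ) 1, ∫⁻ z in 𝔻, F (r * z) ∂μ ≤ B) :
    ∫⁻ z in 𝔻, F z ∂μ ≤ B := by
  obtain ⟨r, -, hr, hr₁⟩ := exists_seq_strictMono_tendsto' (zero_lt_one' ℝ)
  have hmaps (n : ℕ) : MapsTo (fun z : ℂ ↦ (r n : ℂ) * z) 𝔻 𝔻 := fun z hz ↦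
    ofReal_mul_mem_disc (Ioo_subset_Ico_self (hr n)) (mem_ball_zero_iff.mp hz).le
  have hlim : ∀ z ∈ 𝔻, Tendsto (fun n ↦ F (r n * z)) atTop (𝓝 (F z)) := fun z hz ↦ by
    have hrz : Tendsto (fun n ↦ (r n : ℂ) * z) atTop (𝓝 z) := by
      simpa using ((Complex.continuous_ofReal.tendsto 1).comp hr₁).mul_const z
    exact (hF z hz).tendsto.comp
      (tendsto_nhdsWithin_iff.mpr ⟨hrz, Eventually.of_forall fun n ↦ hmaps n hz⟩)
  calc ∫⁻ z in 𝔻, F z ∂μ = ∫⁻ z in 𝔻, liminf (fun n ↦ F (r n * z)) atTop ∂μ :=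
        setLIntegral_congr_fun measurableSet_ball fun z hz ↦ (hlim z hz).liminf_eq.symm
    _ ≤ liminf (fun n ↦ ∫⁻ z in 𝔻, F (r n * z) ∂μ) atTop :=
        lintegral_liminf_le' fun n ↦
          (hF.comp (by fun_prop) (hmaps n)).aemeasurable measurableSet_ball
    _ ≤ B := liminf_le_of_frequently_le' (Frequently.of_forall fun n ↦ h _ (hr n))

def IsCarlesonMeasure (μ : Measure ℂ) (C : ℝ) : Prop :=
  ∀ h : ℂ → ℂ, DifferentiableOn ℂ h 𝔻 → BddAbove (hardySet h) →
    ∫⁻ z in 𝔻, ENNReal.ofReal (‖h z‖ ^ 2) ∂μ ≤ ENNReal.ofReal (C * hardySq h)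

namespace IsCarlesonMeasure

variable {μ : Measure ℂ} {C : ℝ}

theorem lintegral_le_of_differentiable (hμ : IsCarlesonMeasure μ C) {H : ℂ → ℂ}
    (hH : Differentiable ℂ H) :
    ∫⁻ z in 𝔻, ENNReal.ofReal (‖H z‖ ^ 2) ∂μ ≤
      ENNReal.ofReal (C * circleAverage (fun z ↦ ‖H z‖ ^ 2) 0 1) :=
  (hμ H hH.differentiableOn ⟨_, hH.circleAverage_mem_upperBounds_hardySet⟩).trans
    (ENNReal.ofReal_mul_le_ofReal_mul C (hardySq_nonneg H)
      (Real.sSup_le hH.circleAverage_mem_upperBounds_hardySet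
        (circleAverage_nonneg_of_nonneg fun _ _ ↦ sq_nonneg _)))

theorem lintegral_dilation_le_of_pos (hμ : IsCarlesonMeasure μ C) {X : Type*}
    [NormedAddCommGroup X] [NormedSpace ℂ X] {f : ℂ → X} (hf : DifferentiableOn ℂ f 𝔻)
    (hb : BddAbove (hardySet f)) {r : ℝ} (hr : r ∈ Ico 0 1) {ε : ℝ} (hε : 0 < ε) :
    ∫⁻ z in 𝔻, ENNReal.ofReal (‖f (r * z)‖ ^ 2) ∂μ ≤
      ENNReal.ofReal (C * (exp (4 * ε) * (1 + ε) * hardySq f + exp (4 * ε) * (ε ^ 2 + ε))) := by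
  have hmaps : MapsTo (fun z : ℂ ↦ (r : ℂ) * z) (closedBall 0 1) 𝔻 := fun z hz ↦
    ofReal_mul_mem_disc hr (mem_closedBall_zero_iff.mp hz)
  have hfr : DiffContOnCl ℂ (fun z ↦ f (r * z)) 𝔻 :=
    (hf.comp (by fun_prop) hmaps).diffContOnCl_ball subset_rfl
  obtain ⟨H, hH, hdom, hbound⟩ := exists_entire_majorant hfr hε
  have hscale : circleAverage (fun z ↦ ‖f (r * z)‖ ^ 2) 0 1 =
      circleAverage (fun z ↦ ‖f z‖ ^ 2) 0 r := by
    simp [circleAverage_eq_circleAverage_zero_one (R := r)]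
  have havg : circleAverage (fun z ↦ ‖H z‖ ^ 2) 0 1 ≤
      exp (4 * ε) * (1 + ε) * hardySq f + exp (4 * ε) * (ε ^ 2 + ε) := by
    have hfr_int : CircleIntegrable (fun z ↦ ‖f (r * z)‖ ^ 2) 0 1 :=
      ContinuousOn.circleIntegrable zero_le_one ((hfr.continuousOn.norm.pow 2).mono
        (closure_ball (0 : ℂ) one_ne_zero ▸ sphere_subset_closedBall))
    have hH_int : CircleIntegrable (fun z ↦ ‖H z‖ ^ 2) 0 1 :=
      (hH.continuous.norm.pow 2).continuousOn.circleIntegrable'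
    refine (circleAverage_le_mul_add hfr_int hH_int fun z hz ↦
      hbound z (by rwa [abs_one] at hz)).trans ?_
    rw [hscale]
    gcongr
    exact circleAverage_le_hardySq hb hr
  calc ∫⁻ z in 𝔻, ENNReal.ofReal (‖f (r * z)‖ ^ 2) ∂μ
      ≤ ∫⁻ z in 𝔻, ENNReal.ofReal (‖H z‖ ^ 2) ∂μ :=
        setLIntegral_mono (hH.continuous.norm.pow 2).measurable.ennreal_ofReal fun z hz ↦
          ENNReal.ofReal_le_ofReal
            (pow_le_pow_left₀ (norm_nonneg _) (hdom z (ball_subset_closedBall hz)) 2)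
    _ ≤ ENNReal.ofReal (C * circleAverage (fun z ↦ ‖H z‖ ^ 2) 0 1) :=
        hμ.lintegral_le_of_differentiable hH
    _ ≤ _ := ENNReal.ofReal_mul_le_ofReal_mul C
        (circleAverage_nonneg_of_nonneg fun _ _ ↦ sq_nonneg _) havg

theorem lintegral_dilation_le (hμ : IsCarlesonMeasure μ C) {X : Type*}
    [NormedAddCommGroup X] [NormedSpace ℂ X] {f : ℂ → X} (hf : DifferentiableOn ℂ f 𝔻)
    (hb : BddAbove (hardySet f)) {r : ℝ} (hr : r ∈ Ico 0 1) :
    ∫⁻ z in 𝔻, ENNReal.ofReal (‖f (r * z)‖ ^ 2) ∂μ ≤ ENNReal.ofReal (C * hardySq f) := by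
  have hlim : Tendsto (fun ε ↦
      ENNReal.ofReal (C * (exp (4 * ε) * (1 + ε) * hardySq f + exp (4 * ε) * (ε ^ 2 + ε))))
      (𝓝[>] 0)
      (𝓝 (ENNReal.ofReal (C * hardySq f))) := by
    have hcont : Continuous fun ε ↦
        ENNReal.ofReal (C * (exp (4 * ε) * (1 + ε) * hardySq f + exp (4 * ε) * (ε ^ 2 + ε))) :=
      ENNReal.continuous_ofReal.comp (by fun_prop)
    simpa using (hcont.tendsto 0).mono_left nhdsWithin_le_nhds
  exact ge_of_tendsto hlim (eventually_nhdsWithin_of_forall fun ε hε ↦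
    hμ.lintegral_dilation_le_of_pos hf hb hr hε)

end IsCarlesonMeasure

theorem stmt_10.{u} (μ : Measure ℂ) (C : ℝ)
    (hcar : ∀ h : ℂ → ℂ, DifferentiableOn ℂ h 𝔻 → BddAbove (hardySet h) →
      ∫⁻ z in 𝔻, ENNReal.ofReal (‖h z‖ ^ 2) ∂μ ≤ ENNReal.ofReal (C * hardySq h)) :
    ∀ (X : Type u) [NormedAddCommGroup X] [NormedSpace ℂ X] [CompleteSpace X],
      ∀ f : ℂ → X, DifferentiableOn ℂ f 𝔻 → BddAbove (hardySet f) →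
        ∫⁻ z in 𝔻, ENNReal.ofReal (‖f z‖ ^ 2) ∂μ ≤ ENNReal.ofReal (C * hardySq f) := by
  intro X _ _ _ f hf hb
  exact setLIntegral_disc_le_of_forall_dilation
    (ENNReal.continuous_ofReal.comp_continuousOn (hf.continuousOn.norm.pow 2))
    fun r hr ↦ IsCarlesonMeasure.lintegral_dilation_le hcar hf hb (Ioo_subset_Ico_self hr)
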